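/- arXiv:1709.00097 — 6 statements merged into one kernel-verified Lean document; each statement's English description precedes it below -/
import Mathlib

section
/- (Weighted Vietoris-Rips Lemma, main containment.) Let d ≥ 1, let σ = {x_0, …, x_ℓ} be a finite nonempty set of points in ℝ^d, let r : σ → (0,∞) be a weight function, let t > 0, and let 0 < t' ≤ t·(√(2d/(d+1)))^{-1}. If ‖x − y‖ ≤ t'·(r(x) + r(y)) for all distinct x, y ∈ σ, then the intersection ⋂_{x ∈ σ} B̄(x, t·r(x)) of the closed balls of radius t·r(x) centered at x is nonempty. -/
/-!
By Helly's theorem it suffices to treat at most `d + 1` balls. For weights `w` in the standard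
simplex put `Ψ(w) = ∑ w_j (‖p_j‖² - t² r_j²) - ‖∑ w_j p_j‖²`, a concave function. At a maximiser
`w`, first-order optimality towards each vertex says that the barycentre `c = ∑ w_j p_j` satisfies
`‖p_i - c‖² - t² r_i² ≤ Ψ(w) = ∑ w_j (‖p_j - c‖² - t² r_j²)` for every `i`. The right-hand side is
nonpositive: `∑ w_j ‖p_j - c‖²` is half the weighted sum of the pairwise squared distances, which
the Vietoris–Rips condition and Cauchy–Schwarz over at most `d + 1` indices bound by
`t'² (2d/(d+1)) ∑ w_j r_j² ≤ t² ∑ w_j r_j²`.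
-/

open Finset Filter Topology
open scoped RealInnerProductSpace

section

variable {ι E : Type*} [Fintype ι] [NormedAddCommGroup E] [InnerProductSpace ℝ E]

theorem sum_mul_norm_sub_sum_smul_sq {w : ι → ℝ} (hw : ∑ j, w j = 1) (p : ι → E) :
    ∑ j, w j * ‖p j - ∑ l, w l • p l‖ ^ 2 = ∑ j, w j * ‖p j‖ ^ 2 - ‖∑ l, w l • p l‖ ^ 2 := by
  set c := ∑ l, w l • p l
  have hcross : ∑ j, w j * ⟪p j, c⟫ = ‖c‖ ^ 2 := by
    simp only [c, ← real_inner_smul_left, ← sum_inner, real_inner_self_eq_norm_sq]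
  simp only [norm_sub_sq_real, mul_add, mul_sub, sum_add_distrib, sum_sub_distrib,
    ← sum_mul, hw, mul_left_comm _ (2 : ℝ), ← mul_sum, hcross]
  ring

def simplexPotential (p : ι → E) (a : ι → ℝ) (w : ι → ℝ) : ℝ :=
  ∑ j, w j * (‖p j‖ ^ 2 - a j) - ‖∑ j, w j • p j‖ ^ 2

theorem continuous_simplexPotential (p : ι → E) (a : ι → ℝ) :
    Continuous (simplexPotential p a) := by
  unfold simplexPotential
  fun_prop

theorem simplexPotential_eq_sum {w : ι → ℝ} (hw : ∑ j, w j = 1) (p : ι → E) (a : ι → ℝ) :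
    simplexPotential p a w = ∑ j, w j * (‖p j - ∑ l, w l • p l‖ ^ 2 - a j) := by
  simp only [simplexPotential, mul_sub, sum_sub_distrib, sum_mul_norm_sub_sum_smul_sq hw]
  ring

theorem simplexPotential_smul_add_smul_single [DecidableEq ι] (p : ι → E) (a w : ι → ℝ)
    (i : ι) (s : ℝ) :
    simplexPotential p a ((1 - s) • w + s • Pi.single i 1) =
      (1 - s) * simplexPotential p a w - s * a i + s * (1 - s) * ‖p i - ∑ j, w j • p j‖ ^ 2 := by
  set c := ∑ j, w j • p j
  set ws : ι → ℝ := (1 - s) • w + s • Pi.single i 1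
  have hc : ∑ j, ws j • p j = c + s • (p i - c) := by
    simp only [ws, Pi.add_apply, Pi.smul_apply, smul_eq_mul, Pi.single_apply, mul_ite, mul_one,
      mul_zero, add_smul, mul_smul, ite_smul, zero_smul, sum_add_distrib, ← smul_sum,
      sum_ite_eq', mem_univ, if_true, c]
    module
  have hL : ∑ j, ws j * (‖p j‖ ^ 2 - a j) =
      (1 - s) * ∑ j, w j * (‖p j‖ ^ 2 - a j) + s * (‖p i‖ ^ 2 - a i) := by
    simp [ws, add_mul, mul_assoc, sum_add_distrib, ← mul_sum, Pi.single_apply]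
  have hp : p i = c + (p i - c) := by abel
  simp only [simplexPotential, hc, hL]
  rw [hp, add_sub_cancel_left, norm_add_sq_real, norm_add_sq_real, norm_smul, inner_smul_right,
    Real.norm_eq_abs, mul_pow, sq_abs]
  ring

theorem exists_mem_stdSimplex_forall_norm_sub_sq_sub_le [Nonempty ι] (p : ι → E) (a : ι → ℝ) :
    ∃ w ∈ stdSimplex ℝ ι, ∀ i,
      ‖p i - ∑ j, w j • p j‖ ^ 2 - a i ≤ ∑ j, w j * (‖p j - ∑ l, w l • p l‖ ^ 2 - a j) := by
  classical
  obtain ⟨w, hw, hmax⟩ := (isCompact_stdSimplex ℝ ι).exists_isMaxOn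
    ⟨_, single_mem_stdSimplex ℝ (Classical.arbitrary ι)⟩
    (continuous_simplexPotential p a).continuousOn
  refine ⟨w, hw, fun i => ?_⟩
  rw [← simplexPotential_eq_sum hw.2]
  set N := ‖p i - ∑ j, w j • p j‖ ^ 2
  have hsmall : ∀ s ∈ Set.Ioc (0 : ℝ) 1, N - a i - simplexPotential p a w ≤ s * N := by
    rintro s ⟨hs0, hs1⟩
    have hmem : (1 - s) • w + s • Pi.single i 1 ∈ stdSimplex ℝ ι :=
      convex_stdSimplex ℝ ι hw (single_mem_stdSimplex ℝ i) (by linarith) hs0.le (by ring)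
    have hle := isMaxOn_iff.1 hmax _ hmem
    rw [simplexPotential_smul_add_smul_single] at hle
    exact le_of_mul_le_mul_left (by linarith) hs0
  have hlim : Tendsto (fun s => s * N) (𝓝[>] 0) (𝓝 0) :=
    tendsto_nhdsWithin_of_tendsto_nhds (by simpa using (continuous_mul_const N).tendsto 0)
  linarith [ge_of_tendsto hlim (eventually_of_mem (Ioc_mem_nhdsGT one_pos) hsmall)]

theorem sum_sum_mul_norm_sub_sq {w : ι → ℝ} (hw : ∑ j, w j = 1) (p : ι → E) :
    ∑ j, ∑ l, w j * w l * ‖p j - p l‖ ^ 2 = 2 * ∑ j, w j * ‖p j - ∑ l, w l • p l‖ ^ 2 := by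
  have hcross : ∑ j, ∑ l, w j * w l * ⟪p j, p l⟫ = ‖∑ l, w l • p l‖ ^ 2 := by
    rw [← real_inner_self_eq_norm_sq, sum_inner]
    simp only [inner_sum, real_inner_smul_left, real_inner_smul_right, mul_assoc, mul_left_comm]
  have hleft : ∑ j, ∑ l, w j * w l * ‖p j‖ ^ 2 = ∑ j, w j * ‖p j‖ ^ 2 := by
    simp only [mul_right_comm (w _) (w _), ← mul_sum, hw, mul_one]
  have hright : ∑ j, ∑ l, w j * w l * ‖p l‖ ^ 2 = ∑ j, w j * ‖p j‖ ^ 2 := by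
    simp only [mul_assoc, ← mul_sum, ← sum_mul, hw, one_mul]
  rw [sum_mul_norm_sub_sum_smul_sq hw]
  simp only [norm_sub_sq_real, mul_add, mul_sub, sum_add_distrib, sum_sub_distrib, hleft, hright,
    mul_left_comm _ (2 : ℝ), ← mul_sum, hcross]
  ring

theorem sum_sum_mul_add_sq_sub_le {d : ℕ} (hd : 1 ≤ d) (hcard : Fintype.card ι ≤ d + 1)
    {w : ι → ℝ} (hw : w ∈ stdSimplex ℝ ι) (R : ι → ℝ) :
    ∑ j, ∑ l, w j * w l * (R j + R l) ^ 2 - 4 * ∑ j, (w j * R j) ^ 2 ≤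
      2 * (2 * d / (d + 1)) * ∑ j, w j * R j ^ 2 := by
  obtain ⟨hw0, hw1⟩ := hw
  set A := ∑ j, w j * R j ^ 2
  set B := (∑ j, w j * R j) ^ 2
  set C := ∑ j, (w j * R j) ^ 2
  have hpair : ∑ j, ∑ l, w j * w l * (R j + R l) ^ 2 = 2 * A + 2 * B := by
    have hsq : ∀ j l, w j * w l * (R j + R l) ^ 2 =
        w j * R j ^ 2 * w l + w j * (w l * R l ^ 2) + 2 * ((w j * R j) * (w l * R l)) := by
      intro j l
      ring
    have hcross : ∑ j, ∑ l, (w j * R j) * (w l * R l) = B := by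
      simp only [B, sq, sum_mul_sum]
    simp only [hsq, sum_add_distrib, ← mul_sum (s := univ) (a := (2 : ℝ)), hcross]
    simp only [← sum_mul, ← mul_sum, hw1]
    ring
  have hBA : B ≤ A := by
    simpa [hw1] using sum_sq_le_sum_mul_sum_of_sq_le_mul univ (r := fun j => w j * R j)
      (fun j _ => hw0 j) (fun j _ => mul_nonneg (hw0 j) (sq_nonneg (R j)))
      (fun j _ => le_of_eq (by ring))
  have hBC : B ≤ (d + 1) * C := by
    have hcard' : (Fintype.card ι : ℝ) ≤ d + 1 := by exact_mod_cast hcard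
    calc B ≤ Fintype.card ι * C := by
          simpa using sq_sum_le_card_mul_sum_sq (s := univ) (f := fun j => w j * R j)
      _ ≤ (d + 1) * C := by gcongr
  have hd' : (1 : ℝ) ≤ d := by exact_mod_cast hd
  rw [hpair, mul_div_assoc', div_mul_eq_mul_div, le_div_iff₀ (by positivity)]
  -- `(d + 1) (B - 2C) ≤ (d - 1) B ≤ (d - 1) A`
  nlinarith [mul_le_mul_of_nonneg_left hBA (sub_nonneg.2 hd')]

theorem sum_mul_norm_sub_sum_smul_sq_le {d : ℕ} (hd : 1 ≤ d) (hcard : Fintype.card ι ≤ d + 1)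
    {w : ι → ℝ} (hw : w ∈ stdSimplex ℝ ι) {p : ι → E} {R : ι → ℝ} {t' : ℝ}
    (hVR : ∀ i j, i ≠ j → ‖p i - p j‖ ≤ t' * (R i + R j)) :
    ∑ j, w j * ‖p j - ∑ l, w l • p l‖ ^ 2 ≤ t' ^ 2 * (2 * d / (d + 1)) * ∑ j, w j * R j ^ 2 := by
  classical
  have hterm : ∀ j l, w j * w l * ‖p j - p l‖ ^ 2 ≤
      t' ^ 2 * (w j * w l * (R j + R l) ^ 2 - if j = l then 4 * (w j * R j) ^ 2 else 0) := by
    intro j l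
    rcases eq_or_ne j l with rfl | hjl
    · exact le_of_eq (by rw [if_pos rfl, sub_self, norm_zero]; ring)
    · calc w j * w l * ‖p j - p l‖ ^ 2 ≤ w j * w l * (t' * (R j + R l)) ^ 2 :=
            mul_le_mul_of_nonneg_left (pow_le_pow_left₀ (norm_nonneg _) (hVR j l hjl) 2)
              (mul_nonneg (hw.1 j) (hw.1 l))
        _ = _ := by rw [if_neg hjl]; ring
  have hdouble := sum_le_sum fun j (_ : j ∈ univ) => sum_le_sum fun l (_ : l ∈ univ) => hterm j l
  simp only [← mul_sum, sum_sub_distrib, sum_ite_eq, mem_univ, if_true] at hdouble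
  rw [sum_sum_mul_norm_sub_sq hw.2] at hdouble
  linarith [mul_le_mul_of_nonneg_left (sum_sum_mul_add_sq_sub_le hd hcard hw R) (sq_nonneg t')]

theorem exists_forall_norm_sub_le_of_card_le {d : ℕ} (hd : 1 ≤ d)
    (hcard : Fintype.card ι ≤ d + 1) (p : ι → E) {R : ι → ℝ} (hR : ∀ i, 0 ≤ R i) {t t' : ℝ}
    (ht : 0 ≤ t) (hscale : t' ^ 2 * (2 * d / (d + 1)) ≤ t ^ 2)
    (hVR : ∀ i j, i ≠ j → ‖p i - p j‖ ≤ t' * (R i + R j)) :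
    ∃ c, ∀ i, ‖p i - c‖ ≤ t * R i := by
  cases isEmpty_or_nonempty ι
  · exact ⟨0, isEmptyElim⟩
  obtain ⟨w, hw, hopt⟩ :=
    exists_mem_stdSimplex_forall_norm_sub_sq_sub_le p (fun j => t ^ 2 * R j ^ 2)
  refine ⟨∑ j, w j • p j, fun i => ?_⟩
  have hexcess : ∑ j, w j * (‖p j - ∑ l, w l • p l‖ ^ 2 - t ^ 2 * R j ^ 2) ≤ 0 := by
    have hA : 0 ≤ ∑ j, w j * R j ^ 2 := sum_nonneg fun j _ => mul_nonneg (hw.1 j) (sq_nonneg _)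
    simp only [mul_sub, sum_sub_distrib, mul_left_comm _ (t ^ 2), ← mul_sum, sub_nonpos]
    calc ∑ j, w j * ‖p j - ∑ l, w l • p l‖ ^ 2
        ≤ t' ^ 2 * (2 * d / (d + 1)) * ∑ j, w j * R j ^ 2 :=
          sum_mul_norm_sub_sum_smul_sq_le hd hcard hw hVR
      _ ≤ t ^ 2 * ∑ j, w j * R j ^ 2 := mul_le_mul_of_nonneg_right hscale hA
  have hsq : ‖p i - ∑ j, w j • p j‖ ^ 2 ≤ (t * R i) ^ 2 := by
    linarith [hopt i, mul_pow t (R i) 2]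
  exact (sq_le_sq₀ (norm_nonneg _) (mul_nonneg ht (hR i))).1 hsq

end

theorem sq_mul_le_sq_of_le_mul_inv_sqrt {a b q : ℝ} (ha : 0 ≤ a) (hq : 0 < q)
    (h : a ≤ b * (√q)⁻¹) : a ^ 2 * q ≤ b ^ 2 :=
  calc a ^ 2 * q = (a * √q) ^ 2 := by rw [mul_pow, Real.sq_sqrt hq.le]
    _ ≤ b ^ 2 := pow_le_pow_left₀ (by positivity) ((le_mul_inv_iff₀ (Real.sqrt_pos.2 hq)).1 h) 2

theorem weighted_vietoris_rips_lemma_general {d : ℕ} (hd : 1 ≤ d)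
    (σ : Finset (EuclideanSpace ℝ (Fin d)))
    (r : EuclideanSpace ℝ (Fin d) → ℝ) (hr : ∀ x ∈ σ, 0 < r x)
    (t t' : ℝ) (ht : 0 < t) (ht'pos : 0 < t')
    (ht' : t' ≤ t * (Real.sqrt (2 * d / (d + 1)))⁻¹)
    (hVR : ∀ x ∈ σ, ∀ y ∈ σ, x ≠ y → ‖x - y‖ ≤ t' * (r x + r y)) :
    (⋂ x ∈ σ, Metric.closedBall x (t * r x)).Nonempty := by
  refine Convex.helly_theorem' (𝕜 := ℝ) (fun x _ => convex_closedBall x (t * r x))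
    fun I hIσ hIcard => ?_
  rw [finrank_euclideanSpace_fin] at hIcard
  have hq : (0 : ℝ) < 2 * d / (d + 1) :=
    div_pos (mul_pos two_pos (Nat.cast_pos.2 hd)) (Nat.cast_add_one_pos d)
  obtain ⟨c, hc⟩ := exists_forall_norm_sub_le_of_card_le hd (by simpa using hIcard)
    (fun x : I => (x : EuclideanSpace ℝ (Fin d))) (fun x => (hr x (hIσ x.2)).le) ht.le
    (sq_mul_le_sq_of_le_mul_inv_sqrt ht'pos.le hq ht')
    (fun x y hxy => hVR x (hIσ x.2) y (hIσ y.2) (Subtype.coe_injective.ne hxy))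
  exact ⟨c, Set.mem_iInter₂.2 fun x hx => by
    rw [Metric.mem_closedBall', dist_eq_norm]
    exact hc ⟨x, hx⟩⟩

/-- Weighted Vietoris-Rips Lemma (main containment): if a finite set of points with
positive weights `r` forms a simplex of the weighted Vietoris-Rips complex at scale `t'`,
where `0 < t' ≤ t·(√(2d/(d+1)))⁻¹`, then the closed balls of radii `t·r(x)` have a
common point, i.e. the set is a simplex of the weighted Čech complex at scale `t`. -/
theorem weighted_vietoris_rips_lemma {d : ℕ} (hd : 1 ≤ d)
    (σ : Finset (EuclideanSpace ℝ (Fin d))) (hσ : σ.Nonempty)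
    (r : EuclideanSpace ℝ (Fin d) → ℝ) (hr : ∀ x ∈ σ, 0 < r x)
    (t t' : ℝ) (ht : 0 < t) (ht'pos : 0 < t')
    (ht' : t' ≤ t * (Real.sqrt (2 * d / (d + 1)))⁻¹)
    (hVR : ∀ x ∈ σ, ∀ y ∈ σ, x ≠ y → ‖x - y‖ ≤ t' * (r x + r y)) :
    (⋂ x ∈ σ, Metric.closedBall x (t * r x)).Nonempty :=
  weighted_vietoris_rips_lemma_general hd σ r hr t t' ht ht'pos ht' hVR
end

section
/- (Stability for linear radius functions.) Let X and Y be finite nonempty subsets of ℝ^d, and suppose all radius functions are linear: there are positive constants r_x (x ∈ X) and s_y (y ∈ Y) with r_x(t) = r_x·t and s_y(t) = s_y·t. Let η ⊆ X × Y be a relation such that every x ∈ X is related to some y ∈ Y and every y ∈ Y is related to some x ∈ X, and let K be a compact subset of ℝ^d containing X ∪ Y. Then for every z ∈ K, |f_{X,r}(z) − f_{Y,s}(z)| ≤ diam(K) · max_{(x,y) ∈ η} |1/r_x − 1/s_y| + (max_{(x,y) ∈ η} ‖x − y‖) · max( max_{x ∈ X} 1/r_x, max_{y ∈ Y} 1/s_y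 ). -/
/-!
Let `y` attain the minimum defining `f_{Y,s}(z)` and let `x` be related to `y`. By the triangle
inequality `f_{X,r}(z) ≤ d(z,x)/r_x ≤ d(z,y)/r_x + d(x,y)/r_x`, and
`d(z,y)/r_x = d(z,y)/s_y + d(z,y)(1/r_x - 1/s_y)`, so `f_{X,r}(z) - f_{Y,s}(z)` is bounded by
`d(z,y)|1/r_x - 1/s_y| + d(x,y)/r_x`. The reverse inequality is the same argument with the roles
of `X` and `Y` exchanged.
-/

open Finset

variable {E : Type*} [PseudoMetricSpace E]

lemma dist_div_sub_dist_div_le {r s : ℝ} (hr : 0 ≤ r) (x y z : E) :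
    dist z x / r - dist z y / s ≤ dist z y * |1 / r - 1 / s| + dist x y * (1 / r) := by
  have htri : dist z x * (1 / r) ≤ (dist z y + dist x y) * (1 / r) := by
    gcongr
    rw [dist_comm x y]
    exact dist_triangle z y x
  have hdiff : dist z y * (1 / r - 1 / s) ≤ dist z y * |1 / r - 1 / s| :=
    mul_le_mul_of_nonneg_left (le_abs_self _) dist_nonneg
  calc dist z x / r - dist z y / s
      = dist z x * (1 / r) - dist z y * (1 / s) := by ring
    _ ≤ dist z y * (1 / r - 1 / s) + dist x y * (1 / r) := by linarith
    _ ≤ dist z y * |1 / r - 1 / s| + dist x y * (1 / r) := by linarith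

section EntryFunction

variable {X Y : Finset E} {r s : E → ℝ} {R : E → E → Prop} {z : E} {A B C D : ℝ}

lemma inf'_dist_div_sub_inf'_dist_div_le (hX : X.Nonempty) (hY : Y.Nonempty)
    (hr : ∀ x ∈ X, 0 ≤ r x) (hR : ∀ y ∈ Y, ∃ x ∈ X, R x y)
    (hA : ∀ y ∈ Y, dist z y ≤ A)
    (hB : ∀ x y, R x y → |1 / r x - 1 / s y| ≤ B) (hC : ∀ x y, R x y → dist x y ≤ C)
    (hD : ∀ x ∈ X, 1 / r x ≤ D) :
    X.inf' hX (fun x => dist z x / r x) - Y.inf' hY (fun y => dist z y / s y) ≤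
      A * B + C * D := by
  obtain ⟨y, hy, hymin⟩ := Y.exists_mem_eq_inf' hY (fun y => dist z y / s y)
  obtain ⟨x, hx, hxy⟩ := hR y hy
  have hrx : 0 ≤ 1 / r x := one_div_nonneg.2 (hr x hx)
  calc X.inf' hX (fun x => dist z x / r x) - Y.inf' hY (fun y => dist z y / s y)
      ≤ dist z x / r x - dist z y / s y := by
        rw [hymin]
        exact sub_le_sub_right (inf'_le _ hx) _
    _ ≤ dist z y * |1 / r x - 1 / s y| + dist x y * (1 / r x) :=
        dist_div_sub_dist_div_le (hr x hx) x y z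
    _ ≤ A * B + C * D := by
        gcongr
        · exact dist_nonneg.trans (hA y hy)
        · exact hA y hy
        · exact hB x y hxy
        · exact dist_nonneg.trans (hC x y hxy)
        · exact hC x y hxy
        · exact hD x hx

lemma abs_inf'_dist_div_sub_inf'_dist_div_le (hX : X.Nonempty) (hY : Y.Nonempty)
    (hr : ∀ x ∈ X, 0 ≤ r x) (hs : ∀ y ∈ Y, 0 ≤ s y)
    (hRX : ∀ x ∈ X, ∃ y ∈ Y, R x y) (hRY : ∀ y ∈ Y, ∃ x ∈ X, R x y)
    (hAX : ∀ x ∈ X, dist z x ≤ A) (hAY : ∀ y ∈ Y, dist z y ≤ A)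
    (hB : ∀ x y, R x y → |1 / r x - 1 / s y| ≤ B) (hC : ∀ x y, R x y → dist x y ≤ C)
    (hDX : ∀ x ∈ X, 1 / r x ≤ D) (hDY : ∀ y ∈ Y, 1 / s y ≤ D) :
    |X.inf' hX (fun x => dist z x / r x) - Y.inf' hY (fun y => dist z y / s y)| ≤
      A * B + C * D :=
  abs_sub_le_iff.2
    ⟨inf'_dist_div_sub_inf'_dist_div_le hX hY hr hRY hAY hB hC hDX,
      inf'_dist_div_sub_inf'_dist_div_le (R := fun y x => R x y) hY hX hs hRX hAX
        (fun y x hxy => abs_sub_comm (1 / r x) (1 / s y) ▸ hB x y hxy)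
        (fun y x hxy => dist_comm x y ▸ hC x y hxy) hDY⟩

end EntryFunction

theorem entry_function_stability_linear_general {d : ℕ}
    (X Y : Finset (EuclideanSpace ℝ (Fin d))) (hX : X.Nonempty) (hY : Y.Nonempty)
    (r s : EuclideanSpace ℝ (Fin d) → ℝ)
    (hr : ∀ x ∈ X, 0 < r x) (hs : ∀ y ∈ Y, 0 < s y)
    (η : Finset (EuclideanSpace ℝ (Fin d) × EuclideanSpace ℝ (Fin d)))
    (hηne : η.Nonempty)
    (hη1 : ∀ x ∈ X, ∃ y ∈ Y, (x, y) ∈ η)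
    (hη2 : ∀ y ∈ Y, ∃ x ∈ X, (x, y) ∈ η)
    (K : Set (EuclideanSpace ℝ (Fin d))) (hK : IsCompact K)
    (hXK : ↑X ⊆ K) (hYK : ↑Y ⊆ K) :
    ∀ z ∈ K,
      |X.inf' hX (fun x => ‖z - x‖ / r x) - Y.inf' hY (fun y => ‖z - y‖ / s y)| ≤
        Metric.diam K * (η.sup' hηne fun p => |1 / r p.1 - 1 / s p.2|) +
          (η.sup' hηne fun p => ‖p.1 - p.2‖) *
            max (X.sup' hX fun x => 1 / r x) (Y.sup' hY fun y => 1 / s y) := by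
  intro z hz
  simp_rw [← dist_eq_norm]
  have hdiam {w} (hw : w ∈ K) : dist z w ≤ Metric.diam K :=
    Metric.dist_le_diam_of_mem hK.isBounded hz hw
  exact abs_inf'_dist_div_sub_inf'_dist_div_le (R := fun x y => (x, y) ∈ η) hX hY
    (fun x hx => (hr x hx).le) (fun y hy => (hs y hy).le) hη1 hη2
    (fun x hx => hdiam (hXK hx)) (fun y hy => hdiam (hYK hy))
    (fun x y hxy => le_sup' (fun p => |1 / r p.1 - 1 / s p.2|) hxy)
    (fun x y hxy => le_sup' (fun p => dist p.1 p.2) hxy)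
    (fun x hx => le_max_of_le_left (le_sup' (fun x => 1 / r x) hx))
    (fun y hy => le_max_of_le_right (le_sup' (fun y => 1 / s y) hy))

/-- Stability of entry functions for linear radius functions `r_x(t) = r_x·t` and
`s_y(t) = s_y·t`: for every `z` in a compact set `K` containing `X ∪ Y`,
`|f_{X,r}(z) - f_{Y,s}(z)| ≤ diam(K)·max_{(x,y) ∈ η} |1/r_x - 1/s_y|
  + (max_{(x,y) ∈ η} ‖x - y‖)·max(max_{x ∈ X} 1/r_x, max_{y ∈ Y} 1/s_y)`,
where `f_{X,r}(z) = min_{x ∈ X} ‖z - x‖ / r_x`. -/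
theorem entry_function_stability_linear {d : ℕ}
    (X Y : Finset (EuclideanSpace ℝ (Fin d))) (hX : X.Nonempty) (hY : Y.Nonempty)
    (r s : EuclideanSpace ℝ (Fin d) → ℝ)
    (hr : ∀ x ∈ X, 0 < r x) (hs : ∀ y ∈ Y, 0 < s y)
    (η : Finset (EuclideanSpace ℝ (Fin d) × EuclideanSpace ℝ (Fin d)))
    (hηne : η.Nonempty)
    (hηXY : ∀ p ∈ η, p.1 ∈ X ∧ p.2 ∈ Y)
    (hη1 : ∀ x ∈ X, ∃ y ∈ Y, (x, y) ∈ η)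
    (hη2 : ∀ y ∈ Y, ∃ x ∈ X, (x, y) ∈ η)
    (K : Set (EuclideanSpace ℝ (Fin d))) (hK : IsCompact K)
    (hXK : ↑X ⊆ K) (hYK : ↑Y ⊆ K) :
    ∀ z ∈ K,
      |X.inf' hX (fun x => ‖z - x‖ / r x) - Y.inf' hY (fun y => ‖z - y‖ / s y)| ≤
        Metric.diam K * (η.sup' hηne fun p => |1 / r p.1 - 1 / s p.2|) +
          (η.sup' hηne fun p => ‖p.1 - p.2‖) *
            max (X.sup' hX fun x => 1 / r x) (Y.sup' hY fun y => 1 / s y) :=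
  entry_function_stability_linear_general X Y hX hY r s hr hs η hηne hη1 hη2 K hK hXK hYK
end

section
/- (Weight-function stability.) Let X be a finite nonempty subset of ℝ^d, and let r and s each assign to every x ∈ X a bijection of [0,∞) that is differentiable with strictly positive derivative. Let K be a compact subset of ℝ^d containing X. Then for every z ∈ K, |f_{X,r}(z) − f_{X,s}(z)| ≤ max_{x ∈ X} sup_{u ∈ [0, diam K]} |r_x^{-1}(u) − s_x^{-1}(u)|. -/
/-! Both entry functions are minima over the same finite set, and a minimum is 1-Lipschitz for
the sup-distance, so it suffices to compare `r_x⁻¹` and `s_x⁻¹` at the single radius `‖z - x‖`,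
which lies in `[0, diam K]`. The supremum on the right is finite (so the junk value of `sSup`
does not intervene) because both inverses are monotone: the radius functions have positive
derivative, hence are monotone, and so are their inverses. -/

open Set

theorem Finset.abs_inf'_sub_inf'_le {ι α : Type*} [AddCommGroup α] [LinearOrder α]
    [IsOrderedAddMonoid α] {s : Finset ι} (hs : s.Nonempty) {f g : ι → α} {M : α}
    (h : ∀ i ∈ s, |f i - g i| ≤ M) : |s.inf' hs f - s.inf' hs g| ≤ M := by
  have one_side : ∀ {f g : ι → α}, (∀ i ∈ s, |f i - g i| ≤ M) →
      s.inf' hs f - s.inf' hs g ≤ M := fun {f g} h => by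
    refine sub_le_comm.1 (Finset.le_inf' hs _ fun i hi => ?_)
    exact (sub_le_sub_right (s.inf'_le f hi) M).trans (sub_le_comm.1 (le_of_abs_le (h i hi)))
  exact abs_sub_le_iff.2
    ⟨one_side h, one_side fun i hi => abs_sub_comm (g i) (f i) ▸ h i hi⟩

theorem monotoneOn_of_forall_hasDerivWithinAt_nonneg {D : Set ℝ} (hD : Convex ℝ D)
    {f f' : ℝ → ℝ} (hf : ∀ u ∈ D, HasDerivWithinAt f (f' u) D u) (hf' : ∀ u ∈ D, 0 ≤ f' u) :
    MonotoneOn f D :=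
  monotoneOn_of_hasDerivWithinAt_nonneg hD (fun u hu => (hf u hu).continuousWithinAt)
    (fun u hu => (hf u (interior_subset hu)).mono interior_subset)
    (fun u hu => hf' u (interior_subset hu))

theorem monotoneOn_of_invOn_of_hasDerivWithinAt_nonneg {D T : Set ℝ} (hD : Convex ℝ D)
    {g gi g' : ℝ → ℝ} (hbij : BijOn g D T) (hinv : InvOn gi g D T)
    (hg : ∀ u ∈ D, HasDerivWithinAt g (g' u) D u) (hg' : ∀ u ∈ D, 0 ≤ g' u) :
    MonotoneOn gi T :=
  Function.monotoneOn_of_rightInvOn_of_mapsTo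
    (monotoneOn_of_forall_hasDerivWithinAt_nonneg hD hg hg') hinv.2
    (hbij.symm hinv.symm).mapsTo

theorem bddAbove_image_abs_sub_of_monotoneOn {α : Type*} [Preorder α] {f g : α → ℝ} {a b : α}
    (hf : MonotoneOn f (Icc a b)) (hg : MonotoneOn g (Icc a b)) :
    BddAbove ((fun u => |f u - g u|) '' Icc a b) := by
  refine ⟨max (f b - g a) (g b - f a), ?_⟩
  rintro _ ⟨u, hu, rfl⟩
  have hab : a ≤ b := hu.1.trans hu.2
  have hfu := hf hu (right_mem_Icc.2 hab) hu.2
  have hgu := hg hu (right_mem_Icc.2 hab) hu.2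
  have hfa := hf (left_mem_Icc.2 hab) hu hu.1
  have hga := hg (left_mem_Icc.2 hab) hu hu.1
  exact abs_sub_le_iff.2 ⟨le_max_of_le_left (by linarith), le_max_of_le_right (by linarith)⟩

/-- Weight-function stability: `X` is a finite nonempty subset of `ℝ^d` with two radius
functions `r` and `s` (with inverses `ri`, `si` and derivatives `r'`, `s'`), each a
bijection of `[0,∞)` differentiable with strictly positive derivative, and `K` is a
compact set containing `X`. Then for every `z ∈ K`,
`|f_{X,r}(z) - f_{X,s}(z)| ≤ max_{x ∈ X} sup_{u ∈ [0, diam K]} |r_x⁻¹(u) - s_x⁻¹(u)|`. -/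
theorem entry_function_weight_stability {d : ℕ}
    (X : Finset (EuclideanSpace ℝ (Fin d))) (hX : X.Nonempty)
    (r ri r' s si s' : EuclideanSpace ℝ (Fin d) → ℝ → ℝ)
    (hrbij : ∀ x ∈ X, Set.BijOn (r x) (Set.Ici 0) (Set.Ici 0))
    (hrinv : ∀ x ∈ X, Set.InvOn (ri x) (r x) (Set.Ici 0) (Set.Ici 0))
    (hrderiv : ∀ x ∈ X, ∀ u ∈ Set.Ici (0:ℝ),
      HasDerivWithinAt (r x) (r' x u) (Set.Ici 0) u)
    (hrpos : ∀ x ∈ X, ∀ u ∈ Set.Ici (0:ℝ), 0 < r' x u)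
    (hsbij : ∀ x ∈ X, Set.BijOn (s x) (Set.Ici 0) (Set.Ici 0))
    (hsinv : ∀ x ∈ X, Set.InvOn (si x) (s x) (Set.Ici 0) (Set.Ici 0))
    (hsderiv : ∀ x ∈ X, ∀ u ∈ Set.Ici (0:ℝ),
      HasDerivWithinAt (s x) (s' x u) (Set.Ici 0) u)
    (hspos : ∀ x ∈ X, ∀ u ∈ Set.Ici (0:ℝ), 0 < s' x u)
    (K : Set (EuclideanSpace ℝ (Fin d))) (hK : IsCompact K) (hXK : ↑X ⊆ K) :
    ∀ z ∈ K,
      |X.inf' hX (fun x => ri x ‖z - x‖) - X.inf' hX (fun x => si x ‖z - x‖)| ≤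
        X.sup' hX fun x =>
          sSup ((fun u => |ri x u - si x u|) '' Set.Icc 0 (Metric.diam K)) := by
  intro z hz
  refine Finset.abs_inf'_sub_inf'_le hX fun x hx => ?_
  have hzx : ‖z - x‖ ∈ Icc 0 (Metric.diam K) :=
    ⟨norm_nonneg _, dist_eq_norm z x ▸ Metric.dist_le_diam_of_mem hK.isBounded hz (hXK hx)⟩
  have hri : MonotoneOn (ri x) (Ici 0) :=
    monotoneOn_of_invOn_of_hasDerivWithinAt_nonneg (convex_Ici 0) (hrbij x hx) (hrinv x hx)
      (hrderiv x hx) fun u hu => (hrpos x hx u hu).le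
  have hsi : MonotoneOn (si x) (Ici 0) :=
    monotoneOn_of_invOn_of_hasDerivWithinAt_nonneg (convex_Ici 0) (hsbij x hx) (hsinv x hx)
      (hsderiv x hx) fun u hu => (hspos x hx u hu).le
  have hbdd : BddAbove ((fun u => |ri x u - si x u|) '' Icc 0 (Metric.diam K)) :=
    bddAbove_image_abs_sub_of_monotoneOn (hri.mono Icc_subset_Ici_self)
      (hsi.mono Icc_subset_Ici_self)
  exact (le_csSup hbdd (mem_image_of_mem _ hzx)).trans
    (X.le_sup' (fun x => sSup ((fun u => |ri x u - si x u|) '' Icc 0 (Metric.diam K))) hx)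
end

section
/- (Minimizer lies in the convex hull of the active points.) Let x_0, …, x_ℓ be points in ℝ^d, let r_0, …, r_ℓ > 0, and define f : ℝ^d → ℝ by f(y) = max_{0 ≤ j ≤ ℓ} ‖x_j − y‖/r_j. Suppose y_0 ∈ ℝ^d is a global minimizer of f. Then y_0 belongs to the convex hull of the set {x_j : ‖x_j − y_0‖/r_j = f(y_0)} of points at which the maximum is attained. -/
/-!
If `y₀` were outside the convex hull `K` of the active points, the nearest point `w` of `K` to
`y₀` would give a direction `v = w - y₀` making an acute angle with every `x_j - y₀`, `x_j` active.
Moving `y₀` slightly along `v` then strictly decreases every active term, while the inactive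
terms stay below the maximum by continuity, so the maximum drops: `y₀` was not a minimizer.
-/

open Filter Topology
open scoped RealInnerProductSpace

section InnerProductSpace

variable {E : Type*} [NormedAddCommGroup E] [InnerProductSpace ℝ E]

theorem eventually_norm_sub_smul_lt {u v : E} (h : 0 < ⟪u, v⟫) :
    ∀ᶠ t in 𝓝[>] (0 : ℝ), ‖u - t • v‖ < ‖u‖ := by
  have hsmall : ∀ᶠ t in 𝓝 (0 : ℝ), t * ‖v‖ ^ 2 < 2 * ⟪u, v⟫ :=
    (continuous_id.mul continuous_const).continuousAt.eventually_lt continuousAt_const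
      (by simpa using h)
  filter_upwards [self_mem_nhdsWithin, nhdsWithin_le_nhds hsmall] with t (ht : 0 < t) hts
  have hsq : ‖u - t • v‖ ^ 2 = ‖u‖ ^ 2 - t * (2 * ⟪u, v⟫ - t * ‖v‖ ^ 2) := by
    rw [norm_sub_sq_real, real_inner_smul_right, norm_smul, Real.norm_of_nonneg ht.le]
    ring
  exact (pow_lt_pow_iff_left₀ (norm_nonneg _) (norm_nonneg _) two_ne_zero).1 (by nlinarith)

theorem exists_forall_inner_sub_pos_of_notMem {K : Set E} (hconv : Convex ℝ K)
    (hcomp : IsComplete K) {x : E} (hx : x ∉ K) : ∃ v : E, ∀ z ∈ K, 0 < ⟪z - x, v⟫ := by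
  rcases K.eq_empty_or_nonempty with rfl | hne
  · exact ⟨0, by simp⟩
  obtain ⟨w, hwK, hw⟩ := exists_norm_eq_iInf_of_complete_convex hne hcomp hconv x
  have hproj := (norm_eq_iInf_iff_real_inner_le_zero hconv hwK).1 hw
  have hv : 0 < ‖w - x‖ := norm_pos_iff.2 (sub_ne_zero.2 (ne_of_mem_of_not_mem hwK hx))
  refine ⟨w - x, fun z hz => ?_⟩
  have hsplit : ⟪z - x, w - x⟫ = ⟪z - w, w - x⟫ + ‖w - x‖ ^ 2 := by
    rw [← real_inner_self_eq_norm_sq, ← inner_add_left, sub_add_sub_cancel]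
  have hobtuse : 0 ≤ ⟪z - w, w - x⟫ := by
    rw [real_inner_comm, ← neg_sub x w, inner_neg_left]
    linarith [hproj z hz]
  rw [hsplit]
  positivity

end InnerProductSpace

/-- A global minimizer `y₀` of `f(y) = max_j ‖x_j - y‖ / r_j` lies in the convex hull of
the set of points `x_j` at which the maximum is attained. -/
theorem minimizer_mem_convexHull_active {d ℓ : ℕ}
    (p : Fin (ℓ + 1) → EuclideanSpace ℝ (Fin d))
    (r : Fin (ℓ + 1) → ℝ) (hr : ∀ j, 0 < r j)
    (y₀ : EuclideanSpace ℝ (Fin d))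
    (hmin : ∀ y : EuclideanSpace ℝ (Fin d),
      (Finset.univ.sup' Finset.univ_nonempty fun j => ‖p j - y₀‖ / r j) ≤
        Finset.univ.sup' Finset.univ_nonempty fun j => ‖p j - y‖ / r j) :
    y₀ ∈ convexHull ℝ {z : EuclideanSpace ℝ (Fin d) | ∃ j, p j = z ∧
      ‖p j - y₀‖ / r j = Finset.univ.sup' Finset.univ_nonempty
        fun i => ‖p i - y₀‖ / r i} := by
  set M := Finset.univ.sup' Finset.univ_nonempty fun i => ‖p i - y₀‖ / r i
  set S := {z : EuclideanSpace ℝ (Fin d) | ∃ j, p j = z ∧ ‖p j - y₀‖ / r j = M}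
  by_contra hy
  have hS : S.Finite := (Set.finite_range p).subset (by rintro _ ⟨j, rfl, -⟩; exact ⟨j, rfl⟩)
  obtain ⟨v, hv⟩ := exists_forall_inner_sub_pos_of_notMem (convex_convexHull ℝ S)
    (hS.isCompact_convexHull (𝕜 := ℝ)).isComplete hy
  have hdesc : ∀ j, ∀ᶠ t in 𝓝[>] (0 : ℝ), ‖p j - y₀ - t • v‖ / r j < M := by
    intro j
    rcases (Finset.le_sup' (fun i => ‖p i - y₀‖ / r i) (Finset.mem_univ j)).eq_or_lt with hj | hj
    · filter_upwards [eventually_norm_sub_smul_lt (hv _ (subset_convexHull ℝ S ⟨j, rfl, hj⟩))]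
        with t ht
      exact (div_lt_div_of_pos_right ht (hr j)).trans_eq hj
    · have hcont : Continuous fun t : ℝ => ‖p j - y₀ - t • v‖ / r j := by fun_prop
      exact nhdsWithin_le_nhds
        (hcont.continuousAt.eventually_lt continuousAt_const (by simpa using hj))
  obtain ⟨t, ht⟩ := (eventually_all.2 hdesc).exists
  refine (hmin (y₀ + t • v)).not_gt ((Finset.sup'_lt_iff _).2 fun j _ => ?_)
  simpa only [sub_add_eq_sub_sub] using ht j
end

section
/- (Strict descent in a direction making positive inner product with all active displacement vectors.) Let x_0, …, x_n be points in ℝ^d, let r_0, …, r_n > 0, let y_0 ∈ ℝ^d, and let v ∈ ℝ^d be a nonzero vector with ⟨v, x_j − y_0⟩ > 0 for all 0 ≤ j ≤ n. Then there exists λ_1 > 0 such that for all 0 < λ < λ_1, max_{0 ≤ j ≤ n} ‖x_j − (y_0 + λv)‖/r_j < max_{0 ≤ j ≤ n} ‖x_j − y_0‖/r_j. -/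
/-!
Expanding `‖w - t • v‖² = ‖w‖² - t (2⟪v, w⟫ - t ‖v‖²)` shows that moving from `y₀` along `v`
strictly decreases the distance to every `x_j` as long as `t ‖v‖² < 2⟪v, x_j - y₀⟫`, which holds
for all small `t > 0`. Finitely many such conditions hold simultaneously, and decreasing every
term of a finite maximum decreases the maximum.
-/

open scoped RealInnerProductSpace Topology
open Filter Set

theorem Finset.sup'_lt_sup'_of_forall_lt {α β : Type*} [LinearOrder α] {s : Finset β}
    (H : s.Nonempty) {f g : β → α} (hfg : ∀ i ∈ s, f i < g i) : s.sup' H f < s.sup' H g :=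
  (Finset.sup'_lt_iff H).2 fun i hi => (hfg i hi).trans_le (Finset.le_sup' g hi)

section

variable {E : Type*} [NormedAddCommGroup E] [InnerProductSpace ℝ E]

theorem norm_sub_smul_lt_norm {v w : E} {t : ℝ} (ht : 0 < t)
    (h : t * ‖v‖ ^ 2 < 2 * ⟪v, w⟫) : ‖w - t • v‖ < ‖w‖ := by
  have hsq : ‖w - t • v‖ ^ 2 = ‖w‖ ^ 2 - t * (2 * ⟪v, w⟫ - t * ‖v‖ ^ 2) := by
    rw [norm_sub_sq_real, inner_smul_right, real_inner_comm, norm_smul, mul_pow,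
      Real.norm_eq_abs, sq_abs]
    ring
  refine lt_of_pow_lt_pow_left₀ 2 (norm_nonneg w) ?_
  rw [hsq]
  exact sub_lt_self _ (mul_pos ht (sub_pos.2 h))

theorem eventually_norm_sub_smul_lt_norm {v w : E} (h : 0 < ⟪v, w⟫) :
    ∀ᶠ t in 𝓝[>] (0 : ℝ), ‖w - t • v‖ < ‖w‖ := by
  have hsmall : ∀ᶠ t in 𝓝 (0 : ℝ), t * ‖v‖ ^ 2 < 2 * ⟪v, w⟫ :=
    (continuous_id.mul continuous_const).continuousAt.eventually_lt continuousAt_const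
      (by simpa using h)
  filter_upwards [self_mem_nhdsWithin, nhdsWithin_le_nhds hsmall] with t ht hsmall
  exact norm_sub_smul_lt_norm ht hsmall

end

theorem strict_descent_of_pos_inner_general {d n : ℕ}
    (p : Fin (n + 1) → EuclideanSpace ℝ (Fin d))
    (r : Fin (n + 1) → ℝ) (hr : ∀ j, 0 < r j)
    (y₀ v : EuclideanSpace ℝ (Fin d))
    (hpos : ∀ j, 0 < ⟪v, p j - y₀⟫) :
    ∃ lam₁ > (0:ℝ), ∀ lam : ℝ, 0 < lam → lam < lam₁ →
      (Finset.univ.sup' Finset.univ_nonempty fun j => ‖p j - (y₀ + lam • v)‖ / r j) <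
        Finset.univ.sup' Finset.univ_nonempty fun j => ‖p j - y₀‖ / r j := by
  have hdescent : ∀ᶠ lam in 𝓝[>] (0 : ℝ),
      (Finset.univ.sup' Finset.univ_nonempty fun j => ‖p j - (y₀ + lam • v)‖ / r j) <
        Finset.univ.sup' Finset.univ_nonempty fun j => ‖p j - y₀‖ / r j := by
    filter_upwards [eventually_all.2 fun j => eventually_norm_sub_smul_lt_norm (hpos j)]
      with lam hlam
    refine Finset.sup'_lt_sup'_of_forall_lt _ fun j _ => ?_
    rw [← sub_sub]
    exact div_lt_div_of_pos_right (hlam j) (hr j)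
  obtain ⟨lam₁, hlam₁, hIoo⟩ := mem_nhdsGT_iff_exists_Ioo_subset.1 hdescent
  exact ⟨lam₁, hlam₁, fun lam h₀ h₁ => hIoo ⟨h₀, h₁⟩⟩

/-- Strict descent: if `v` is a nonzero vector making positive inner product with every
displacement `x_j - y₀`, then for all small enough `λ > 0` the value of
`max_j ‖x_j - y‖ / r_j` strictly decreases when moving from `y₀` to `y₀ + λv`. -/
theorem strict_descent_of_pos_inner {d n : ℕ}
    (p : Fin (n + 1) → EuclideanSpace ℝ (Fin d))
    (r : Fin (n + 1) → ℝ) (hr : ∀ j, 0 < r j)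
    (y₀ v : EuclideanSpace ℝ (Fin d)) (hv : v ≠ 0)
    (hpos : ∀ j, 0 < ⟪v, p j - y₀⟫) :
    ∃ lam₁ > (0:ℝ), ∀ lam : ℝ, 0 < lam → lam < lam₁ →
      (Finset.univ.sup' Finset.univ_nonempty fun j => ‖p j - (y₀ + lam • v)‖ / r j) <
        Finset.univ.sup' Finset.univ_nonempty fun j => ‖p j - y₀‖ / r j :=
  strict_descent_of_pos_inner_general p r hr y₀ v hpos
end

section
/- (Key algebraic inequality in the weighted Vietoris-Rips Lemma.) Let d ≥ 1 be an integer and let r_0, r_1, a_0, a_1 be positive reals with a_0·r_0 ≥ a_1·r_1. Then (d − 1 + 4a_0/a_1)·r_0² − 2(d+1)·r_0·r_1 + (d−1)·r_1² ≥ 0, and consequently (r_0 + r_1)² / ( r_0² + (2a_0·r_0²)/(a_1·d) + r_1² ) ≤ 2d/(d+1). -/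
/-!
Put `t = a₀ / a₁`, so the hypothesis reads `r₁ ≤ t r₀`. The quadratic form splits as
`(d - 1)(r₀ - r₁)² + 4 r₀ (t r₀ - r₁)`, a sum of two nonnegative terms. The ratio bound is the same
fact after clearing denominators, since `2d (r₀² + 2t r₀²/d + r₁²) - (d + 1)(r₀ + r₁)²` is exactly
the quadratic form.
-/

section

variable {d t r₀ r₁ : ℝ}

theorem quadratic_nonneg_of_le_mul (hd : 1 ≤ d) (hr₀ : 0 ≤ r₀) (ht : r₁ ≤ t * r₀) :
    0 ≤ (d - 1 + 4 * t) * r₀ ^ 2 - 2 * (d + 1) * r₀ * r₁ + (d - 1) * r₁ ^ 2 := by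
  have hsplit : (d - 1 + 4 * t) * r₀ ^ 2 - 2 * (d + 1) * r₀ * r₁ + (d - 1) * r₁ ^ 2 =
      (d - 1) * (r₀ - r₁) ^ 2 + 4 * r₀ * (t * r₀ - r₁) := by ring
  rw [hsplit]
  exact add_nonneg (mul_nonneg (sub_nonneg.2 hd) (sq_nonneg _))
    (mul_nonneg (by positivity) (sub_nonneg.2 ht))

theorem sq_add_div_le_of_quadratic_nonneg (hd : 1 ≤ d) (ht : 0 ≤ t) (hr₀ : 0 < r₀)
    (hq : 0 ≤ (d - 1 + 4 * t) * r₀ ^ 2 - 2 * (d + 1) * r₀ * r₁ + (d - 1) * r₁ ^ 2) :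
    (r₀ + r₁) ^ 2 / (r₀ ^ 2 + 2 * t * r₀ ^ 2 / d + r₁ ^ 2) ≤ 2 * d / (d + 1) := by
  have hd₀ : 0 < d := by linarith
  have hden : 0 < r₀ ^ 2 + 2 * t * r₀ ^ 2 / d + r₁ ^ 2 := by positivity
  have hcleared : 2 * d * (r₀ ^ 2 + 2 * t * r₀ ^ 2 / d + r₁ ^ 2) = (d + 1) * (r₀ + r₁) ^ 2 +
      ((d - 1 + 4 * t) * r₀ ^ 2 - 2 * (d + 1) * r₀ * r₁ + (d - 1) * r₁ ^ 2) := by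
    field_simp
    ring
  rw [div_le_div_iff₀ hden (by linarith)]
  linarith

end

theorem key_algebraic_inequality_general (d : ℕ) (hd : 1 ≤ d) (r₀ r₁ a₀ a₁ : ℝ)
    (hr₀ : 0 < r₀) (ha₀ : 0 < a₀) (ha₁ : 0 < a₁)
    (h : a₁ * r₁ ≤ a₀ * r₀) :
    0 ≤ ((d : ℝ) - 1 + 4 * a₀ / a₁) * r₀ ^ 2 - 2 * ((d : ℝ) + 1) * r₀ * r₁ +
        ((d : ℝ) - 1) * r₁ ^ 2 ∧
      (r₀ + r₁) ^ 2 / (r₀ ^ 2 + 2 * a₀ * r₀ ^ 2 / (a₁ * (d : ℝ)) + r₁ ^ 2) ≤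
        2 * (d : ℝ) / ((d : ℝ) + 1) := by
  have hd' : (1 : ℝ) ≤ d := by exact_mod_cast hd
  have hratio : r₁ ≤ a₀ / a₁ * r₀ := by
    rw [div_mul_eq_mul_div, le_div_iff₀ ha₁]
    linarith
  have hq := quadratic_nonneg_of_le_mul hd' hr₀.le hratio
  refine ⟨by rwa [mul_div_assoc], ?_⟩
  rw [show 2 * a₀ * r₀ ^ 2 / (a₁ * d) = 2 * (a₀ / a₁) * r₀ ^ 2 / d by ring]
  exact sq_add_div_le_of_quadratic_nonneg hd' (by positivity) hr₀ hq

/-- Key algebraic inequality in the proof of the weighted Vietoris-Rips Lemma. -/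
theorem key_algebraic_inequality (d : ℕ) (hd : 1 ≤ d) (r₀ r₁ a₀ a₁ : ℝ)
    (hr₀ : 0 < r₀) (hr₁ : 0 < r₁) (ha₀ : 0 < a₀) (ha₁ : 0 < a₁)
    (h : a₁ * r₁ ≤ a₀ * r₀) :
    0 ≤ ((d : ℝ) - 1 + 4 * a₀ / a₁) * r₀ ^ 2 - 2 * ((d : ℝ) + 1) * r₀ * r₁ +
        ((d : ℝ) - 1) * r₁ ^ 2 ∧
      (r₀ + r₁) ^ 2 / (r₀ ^ 2 + 2 * a₀ * r₀ ^ 2 / (a₁ * (d : ℝ)) + r₁ ^ 2) ≤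
        2 * (d : ℝ) / ((d : ℝ) + 1) :=
  key_algebraic_inequality_general d hd r₀ r₁ a₀ a₁ hr₀ ha₀ ha₁ h
end
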